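/- arXiv:1501.00466 — 5 statements merged into one kernel-verified Lean document; each statement's English description precedes it below -/
import Mathlib

section
/- For a simple symmetric random walk S on the integers with S(0)=0, and any integers n ≥ 1 and k with 1 ≤ k ≤ n, the probability that S(1)>0, S(2)>0, ..., S(2n-1)>0 and S(2n)=2k equals (k/n)·(1/2^{2n})·C(2n, n+k). -/
/-!
A ±1 path that stays positive and ends at height `j > 0` after `m + 1` steps is a positive path
of length `m` ending at `j - 1` or `j + 1` followed by one step, so the ballot counts satisfy
Pascal's recursion in `(p, q)` with `p + q = m`, `p - q = j`; so does
`(p - q) / (p + q) · C(p + q, p)`, because `C(m, p + 1) (p + 1) = C(m, p) q`.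
Almost surely every `X i` is `±1`; then the sign pattern of the first `2n` steps determines the
walk, and by independence it is uniform on the `2 ^ (2n)` patterns, so the probability is the
ballot count divided by `2 ^ (2n)`.
-/

open MeasureTheory ProbabilityTheory ENNReal Finset

namespace Ballot

def stepOf (b : Bool) : ℤ := if b then 1 else -1

variable {m : ℕ}

def step (ε : Fin m → Bool) (i : ℕ) : ℤ := if h : i < m then stepOf (ε ⟨i, h⟩) else 0

def height (ε : Fin m → Bool) (t : ℕ) : ℤ := ∑ i ∈ range t, step ε i

lemma height_le (ε : Fin m → Bool) (t : ℕ) : height ε t ≤ t := by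
  have hstep : ∀ i, step ε i ≤ 1 := fun i => by
    unfold step stepOf; split_ifs <;> norm_num
  calc height ε t ≤ ∑ _i ∈ range t, (1 : ℤ) := sum_le_sum fun i _ => hstep i
    _ = t := by simp

lemma step_snoc_of_lt (ε : Fin m → Bool) (b : Bool) {i : ℕ} (hi : i < m) :
    step (Fin.snoc ε b : Fin (m + 1) → Bool) i = step ε i := by
  rw [step, step, dif_pos hi, dif_pos (by omega)]
  exact congrArg stepOf (Fin.snoc_castSucc (α := fun _ => Bool) b ε ⟨i, hi⟩)

lemma height_snoc_of_le (ε : Fin m → Bool) (b : Bool) {t : ℕ} (ht : t ≤ m) :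
    height (Fin.snoc ε b : Fin (m + 1) → Bool) t = height ε t :=
  sum_congr rfl fun i hi => step_snoc_of_lt ε b (by grind)

lemma height_snoc_last (ε : Fin m → Bool) (b : Bool) :
    height (Fin.snoc ε b : Fin (m + 1) → Bool) (m + 1) = height ε m + stepOf b := by
  rw [height, sum_range_succ, ← height, height_snoc_of_le ε b le_rfl, step, dif_pos m.lt_succ_self]
  exact congrArg (height ε m + stepOf ·) (Fin.snoc_last (α := fun _ => Bool) b ε)

def IsPositivePath (j : ℤ) (ε : Fin m → Bool) : Prop :=
  (∀ t ∈ Icc 1 m, 0 < height ε t) ∧ height ε m = j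

instance (j : ℤ) : DecidablePred (IsPositivePath (m := m) j) :=
  fun _ => inferInstanceAs (Decidable (_ ∧ _))

lemma isPositivePath_snoc_iff {j : ℤ} (hj : 0 < j) (ε : Fin m → Bool) (b : Bool) :
    IsPositivePath j (Fin.snoc ε b : Fin (m + 1) → Bool) ↔ IsPositivePath (j - stepOf b) ε := by
  simp only [IsPositivePath, mem_Icc, height_snoc_last]
  constructor
  · rintro ⟨hpos, hend⟩
    refine ⟨fun t ht => ?_, by omega⟩
    simpa [height_snoc_of_le ε b ht.2] using hpos t ⟨ht.1, by omega⟩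
  · rintro ⟨hpos, hend⟩
    refine ⟨fun t ht => ?_, by omega⟩
    rcases ht.2.lt_or_eq with ht' | rfl
    · rw [height_snoc_of_le ε b (by omega)]
      exact hpos t ⟨ht.1, by omega⟩
    · rw [height_snoc_last]; omega

def ballotCount (m : ℕ) (j : ℤ) : ℕ := #{ε : Fin m → Bool | IsPositivePath j ε}

lemma ballotCount_zero_zero : ballotCount 0 0 = 1 := by
  decide

lemma ballotCount_eq_zero_of_lt {j : ℤ} (hj : m < j) : ballotCount m j = 0 := by
  rw [ballotCount, card_eq_zero, filter_eq_empty_iff]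
  rintro ε - ⟨-, hend⟩
  linarith [height_le ε m]

lemma ballotCount_zero_right (hm : 0 < m) : ballotCount m 0 = 0 := by
  rw [ballotCount, card_eq_zero, filter_eq_empty_iff]
  rintro ε - ⟨hpos, hend⟩
  linarith [hpos m (mem_Icc.mpr ⟨hm, le_rfl⟩)]

lemma ballotCount_succ {j : ℤ} (hj : 0 < j) :
    ballotCount (m + 1) j = ballotCount m (j - 1) + ballotCount m (j + 1) := by
  simp only [ballotCount, card_filter]
  rw [← (Fin.snocEquiv fun _ => Bool).sum_comp, Fintype.sum_prod_type, Fintype.sum_bool]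
  dsimp only [Fin.snocEquiv, Equiv.coe_fn_mk]
  simp only [isPositivePath_snoc_iff hj, stepOf, if_true, Bool.false_eq_true,
    if_false, sub_neg_eq_add]

theorem ballotCount_mul_add_eq_sub_mul_choose (p q : ℕ) (hqp : q ≤ p) :
    (ballotCount (p + q) (p - q) : ℤ) * (p + q) = (p - q) * (p + q).choose p := by
  obtain ⟨m, hm⟩ : ∃ m, p + q = m := ⟨_, rfl⟩
  induction m generalizing p q with
  | zero =>
    obtain ⟨rfl, rfl⟩ : p = 0 ∧ q = 0 := by omega
    simp
  | succ m ih =>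
    rcases hqp.eq_or_lt with rfl | hqp
    · simp [ballotCount_zero_right (show 0 < q + q by omega)]
    obtain ⟨p, rfl⟩ : ∃ p', p = p' + 1 := ⟨p - 1, by omega⟩
    obtain rfl : m = p + q := by omega
    have hj : (0 : ℤ) < ↑(p + 1) - q := by omega
    have hdown := ih p q (by omega) rfl
    have hup : (ballotCount (p + q) (↑(p + 1) - q + 1) : ℤ) * (p + q) =
        (↑(p + 1) - q + 1) * (p + q).choose (p + 1) := by
      rcases q with _ | q
      · simp [ballotCount_eq_zero_of_lt (show (p : ℤ) < p + 1 + 1 by omega)]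
      · have h := ih (p + 1) q (by omega) (by omega)
        rw [show p + 1 + q = p + (q + 1) by ring] at h
        have hj' : (↑(p + 1) - ↑(q + 1) + 1 : ℤ) = ↑(p + 1) - ↑q := by push_cast; ring
        rw [hj']
        push_cast at h ⊢
        linear_combination h
    have hpascal : ((p + q + 1).choose (p + 1) : ℤ) = (p + q).choose p + (p + q).choose (p + 1) :=
      mod_cast Nat.choose_succ_succ' (p + q) p
    have hratio : ((p + q).choose (p + 1) : ℤ) * (p + 1) = (p + q).choose p * q := by
      have h := Nat.choose_succ_right_eq (p + q) p
      rw [Nat.add_sub_cancel_left] at h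
      exact_mod_cast h
    rw [show p + 1 + q = p + q + 1 by ring, ballotCount_succ hj,
      show (↑(p + 1) - q - 1 : ℤ) = p - q by push_cast; ring]
    rcases Nat.eq_zero_or_pos (p + q) with hzero | hpos
    · obtain ⟨rfl, rfl⟩ : p = 0 ∧ q = 0 := by omega
      simp [ballotCount_zero_zero, ballotCount_eq_zero_of_lt]
    refine mul_right_cancel₀ (show ((p + q : ℕ) : ℤ) ≠ 0 by omega) ?_
    push_cast at hdown hup ⊢
    linear_combination
      (↑p + 1 + ↑q) * (hdown + hup) + 2 * hratio - (↑p + 1 - ↑q) * (↑p + ↑q) * hpascal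

lemma ballotCount_two_mul_mul {n k : ℕ} (hkn : k ≤ n) :
    ballotCount (2 * n) (2 * k) * n = k * (2 * n).choose (n + k) := by
  have h := ballotCount_mul_add_eq_sub_mul_choose (n + k) (n - k) (by omega)
  rw [show n + k + (n - k) = 2 * n by omega, show ((n + k : ℕ) : ℤ) - (n - k : ℕ) = 2 * k by omega,
    show ((n + k : ℕ) : ℤ) + (n - k : ℕ) = 2 * n by omega] at h
  have h' : (ballotCount (2 * n) (2 * k) * n : ℤ) = k * (2 * n).choose (n + k) := by linarith
  exact_mod_cast h'

lemma stepOf_decide_eq_one {x : ℤ} (hx : x = 1 ∨ x = -1) : stepOf (decide (x = 1)) = x := by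
  rcases hx with rfl | rfl <;> rfl

variable {Ω : Type*}

def signPattern (X : ℕ → Ω → ℤ) (m : ℕ) (ω : Ω) : Fin m → Bool := fun i => X i ω = 1

lemma signPattern_preimage_singleton (X : ℕ → Ω → ℤ) (ε : Fin m → Bool) :
    signPattern X m ⁻¹' {ε} =
      ⋂ i ∈ (univ : Finset (Fin m)), X i ⁻¹' (if ε i then {1} else {1}ᶜ) := by
  ext ω
  simp only [Set.mem_preimage, Set.mem_singleton_iff, funext_iff, signPattern, Set.mem_iInter,
    mem_univ, true_implies]
  refine forall_congr' fun i => ?_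
  cases ε i <;> simp

lemma sum_range_eq_height_signPattern {X : ℕ → Ω → ℤ} {ω : Ω}
    (hω : ∀ i < m, X i ω = 1 ∨ X i ω = -1) {t : ℕ} (ht : t ≤ m) :
    ∑ i ∈ range t, X i ω = height (signPattern X m ω) t :=
  sum_congr rfl fun i hi => by
    have hi : i < m := by grind
    rw [step, dif_pos hi, signPattern, stepOf_decide_eq_one (hω i hi)]

lemma isPositivePath_signPattern_iff {X : ℕ → Ω → ℤ} {ω : Ω}
    (hω : ∀ i < m, X i ω = 1 ∨ X i ω = -1) {j : ℤ} (hj : 0 < j) :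
    IsPositivePath j (signPattern X m ω) ↔
      (∀ t, 1 ≤ t → t ≤ m - 1 → 0 < ∑ i ∈ range t, X i ω) ∧ ∑ i ∈ range m, X i ω = j := by
  have hheight (t : ℕ) (ht : t ≤ m) := sum_range_eq_height_signPattern hω ht
  simp only [IsPositivePath, mem_Icc, hheight m le_rfl]
  refine ⟨fun ⟨hpos, hend⟩ => ⟨fun t h1t ht => ?_, hend⟩,
    fun ⟨hpos, hend⟩ => ⟨fun t ht => ?_, hend⟩⟩
  · exact hheight t (by omega) ▸ hpos t ⟨h1t, by omega⟩
  · rcases ht.2.lt_or_eq with ht' | rfl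
    · exact hheight t ht.2 ▸ hpos t ht.1 (by omega)
    · omega

variable [MeasurableSpace Ω] {μ : Measure Ω} [IsProbabilityMeasure μ]

lemma measure_signPattern_preimage_singleton {X : ℕ → Ω → ℤ} (hmeas : ∀ i, Measurable (X i))
    (hindep : iIndepFun X μ) (h1 : ∀ i, μ {ω | X i ω = 1} = 1 / 2) (ε : Fin m → Bool) :
    μ (signPattern X m ⁻¹' {ε}) = 2⁻¹ ^ m := by
  have hhalf : ∀ i : Fin m, μ (X i ⁻¹' (if ε i then {1} else {1}ᶜ)) = 2⁻¹ := fun i => by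
    have hone : μ (X i ⁻¹' {1}) = 2⁻¹ := by rw [← one_div]; exact h1 i
    split_ifs
    · exact hone
    · rw [Set.preimage_compl, prob_compl_eq_one_sub (hmeas i (measurableSet_singleton 1)), hone,
        ENNReal.one_sub_inv_two]
  rw [signPattern_preimage_singleton,
    (hindep.precomp Fin.val_injective).measure_inter_preimage_eq_mul _ fun _ _ => .of_discrete]
  simp [hhalf]

lemma measure_signPattern_preimage {X : ℕ → Ω → ℤ} (hmeas : ∀ i, Measurable (X i))
    (hindep : iIndepFun X μ) (h1 : ∀ i, μ {ω | X i ω = 1} = 1 / 2) (s : Finset (Fin m → Bool)) :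
    μ (signPattern X m ⁻¹' s) = #s * 2⁻¹ ^ m := by
  have hfiber (ε : Fin m → Bool) : MeasurableSet (signPattern X m ⁻¹' {ε}) := by
    rw [signPattern_preimage_singleton]
    exact .biInter (countable_toSet _) fun i _ => hmeas i .of_discrete
  rw [← sum_measure_preimage_singleton s fun ε _ => hfiber ε,
    sum_congr rfl fun ε _ => measure_signPattern_preimage_singleton hmeas hindep h1 ε,
    sum_const, nsmul_eq_mul]

lemma ae_eq_one_or_eq_neg_one {Y : Ω → ℤ} (hY : Measurable Y) (h1 : μ {ω | Y ω = 1} = 1 / 2)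
    (h2 : μ {ω | Y ω = -1} = 1 / 2) : ∀ᵐ ω ∂μ, Y ω = 1 ∨ Y ω = -1 := by
  have hmeas (a : ℤ) : MeasurableSet {ω | Y ω = a} := hY (measurableSet_singleton a)
  have hdisj : Disjoint {ω | Y ω = 1} {ω | Y ω = -1} :=
    Set.disjoint_left.mpr fun ω (h : Y ω = 1) (h' : Y ω = -1) => by omega
  change ∀ᵐ ω ∂μ, ω ∈ {ω | Y ω = 1} ∪ {ω | Y ω = -1}
  rw [ae_mem_iff_measure_eq ((hmeas 1).union (hmeas (-1))).nullMeasurableSet, measure_univ,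
    measure_union hdisj (hmeas (-1)), h1, h2, ENNReal.add_halves]

end Ballot

open Ballot

theorem ballot_positive_excursion_general
    {Ω : Type*} [MeasurableSpace Ω] (μ : Measure Ω) [IsProbabilityMeasure μ]
    (X : ℕ → Ω → ℤ)
    (hmeas : ∀ i, Measurable (X i))
    (hindep : iIndepFun X μ)
    (h1 : ∀ i, μ {ω | X i ω = 1} = 1/2)
    (h2 : ∀ i, μ {ω | X i ω = -1} = 1/2)
    (S : ℕ → Ω → ℤ) (hS : ∀ n ω, S n ω = ∑ i ∈ Finset.range n, X i ω)
    (n k : ℕ) (hk : 1 ≤ k) (hkn : k ≤ n) :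
    μ {ω | (∀ i, 1 ≤ i → i ≤ 2*n - 1 → 0 < S i ω) ∧ S (2*n) ω = 2*k}
      = (k : ℝ≥0∞) / (n : ℝ≥0∞) * ((2*n).choose (n+k) : ℝ≥0∞) / 2^(2*n) := by
  obtain rfl : S = fun t ω => ∑ i ∈ range t, X i ω := funext₂ hS
  have hsigns : ∀ᵐ ω ∂μ, ∀ i < 2 * n, X i ω = 1 ∨ X i ω = -1 :=
    ae_all_iff.2 fun i => (ae_eq_one_or_eq_neg_one (hmeas i) (h1 i) (h2 i)).mono fun _ h _ => h
  have hevent : {ω | (∀ i, 1 ≤ i → i ≤ 2*n - 1 → 0 < ∑ j ∈ range i, X j ω) ∧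
      ∑ j ∈ range (2 * n), X j ω = 2 * k} =ᵐ[μ]
      signPattern X (2 * n) ⁻¹'
        ↑({ε | IsPositivePath (2 * k) ε} : Finset (Fin (2 * n) → Bool)) := by
    refine Filter.eventuallyEq_set.2 (hsigns.mono fun ω hω => ?_)
    rw [Set.mem_preimage, mem_coe, mem_filter, isPositivePath_signPattern_iff hω (by omega)]
    simp
  have hcount : (ballotCount (2 * n) (2 * k) : ℝ≥0∞) = k * (2 * n).choose (n + k) / n := by
    rw [ENNReal.eq_div_iff (by exact_mod_cast (by omega : n ≠ 0)) (ENNReal.natCast_ne_top n),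
      mul_comm]
    exact_mod_cast ballotCount_two_mul_mul hkn
  rw [measure_congr hevent, measure_signPattern_preimage hmeas hindep h1, ← ballotCount, hcount]
  simp only [div_eq_mul_inv, ENNReal.inv_pow]
  ring

/-- Ballot-type formula: for a simple symmetric random walk, the probability that the
walk stays strictly positive up to time `2n-1` and ends at `2k` at time `2n` equals
`(k/n) · 2^{-2n} · C(2n, n+k)`. -/
theorem ballot_positive_excursion
    {Ω : Type*} [MeasurableSpace Ω] (μ : Measure Ω) [IsProbabilityMeasure μ]
    (X : ℕ → Ω → ℤ)
    (hmeas : ∀ i, Measurable (X i))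
    (hindep : iIndepFun X μ)
    (h1 : ∀ i, μ {ω | X i ω = 1} = 1/2)
    (h2 : ∀ i, μ {ω | X i ω = -1} = 1/2)
    (S : ℕ → Ω → ℤ) (hS : ∀ n ω, S n ω = ∑ i ∈ Finset.range n, X i ω)
    (n k : ℕ) (hn : 1 ≤ n) (hk : 1 ≤ k) (hkn : k ≤ n) :
    μ {ω | (∀ i, 1 ≤ i → i ≤ 2*n - 1 → 0 < S i ω) ∧ S (2*n) ω = 2*k}
      = (k : ℝ≥0∞) / (n : ℝ≥0∞) * ((2*n).choose (n+k) : ℝ≥0∞) / 2^(2*n) :=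
  ballot_positive_excursion_general μ X hmeas hindep h1 h2 S hS n k hk hkn
end

section
/- For integers n ≥ 1 and i, j ≥ 1 with i + j ≤ n, the combinatorial identity Σ_{m=i}^{n-j} C(2n-2m, n-m+j)·C(2m, m+i)·(i/m) = C(2n, n+i+j) holds. -/
def Fq (i m : ℕ) : ℚ :=
  ((2*m-1).choose (m+i-1) : ℚ) - ((2*m-1).choose (m+i) : ℚ)

lemma pascal2 (K j : ℕ) :
    (2*K+2).choose (K+j+2)
      = (2*K).choose (K+j) + 2*(2*K).choose (K+j+1) + (2*K).choose (K+j+2) := by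
  have h1 : (2*K+2).choose (K+j+2) = (2*K+1).choose (K+j+1) + (2*K+1).choose (K+j+2) :=
    Nat.choose_succ_succ (2*K+1) (K+j+1)
  have h2 : (2*K+1).choose (K+j+1) = (2*K).choose (K+j) + (2*K).choose (K+j+1) :=
    Nat.choose_succ_succ (2*K) (K+j)
  have h3 : (2*K+1).choose (K+j+2) = (2*K).choose (K+j+1) + (2*K).choose (K+j+2) :=
    Nat.choose_succ_succ (2*K) (K+j+1)
  omega

lemma pascal0 (K : ℕ) :
    (2*K+2).choose (K+1) = 2*(2*K).choose K + 2*(2*K).choose (K+1) := by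
  have h1 : (2*K+2).choose (K+1) = (2*K+1).choose K + (2*K+1).choose (K+1) :=
    Nat.choose_succ_succ (2*K+1) K
  have hs : (2*K+1).choose K = (2*K+1).choose (K+1) := by
    have h := Nat.choose_symm (show K+1 ≤ 2*K+1 by omega)
    rw [show 2*K+1-(K+1) = K by omega] at h
    omega
  have h2 : (2*K+1).choose (K+1) = (2*K).choose K + (2*K).choose (K+1) :=
    Nat.choose_succ_succ (2*K) K
  omega

lemma term_eq (i m : ℕ) (hi : 1 ≤ i) (him : i ≤ m) :
    ((2*m).choose (m+i) : ℚ) * ((i:ℚ)/(m:ℚ)) = Fq i m := by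
  have hm : 1 ≤ m := le_trans hi him
  have h1 : (2*m) * ((2*m-1).choose (m+i-1)) = ((2*m).choose (m+i)) * (m+i) := by
    have h := Nat.add_one_mul_choose_eq (2*m-1) (m+i-1)
    rw [show 2*m-1+1 = 2*m by omega, show m+i-1+1 = m+i by omega] at h
    exact h
  have h2 : (2*m).choose (m+i) = (2*m-1).choose (m+i-1) + (2*m-1).choose (m+i) := by
    have h := Nat.choose_succ_succ (2*m-1) (m+i-1)
    simp only [Nat.succ_eq_add_one] at h
    rw [show 2*m-1+1 = 2*m by omega, show m+i-1+1 = m+i by omega] at h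
    exact h
  have hm0 : (m:ℚ) ≠ 0 := Nat.cast_ne_zero.mpr (by omega)
  have h1' : (2*(m:ℚ)) * ((2*m-1).choose (m+i-1) : ℚ)
      = ((2*m).choose (m+i) : ℚ) * ((m:ℚ)+(i:ℚ)) := by exact_mod_cast h1
  have h2' : ((2*m).choose (m+i) : ℚ)
      = ((2*m-1).choose (m+i-1) : ℚ) + ((2*m-1).choose (m+i) : ℚ) := by exact_mod_cast h2
  unfold Fq
  field_simp
  linear_combination -h1' - (m:ℚ) * h2'

lemma F_top (i n : ℕ) (hi : 1 ≤ i) :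
    Fq i (n+1) = ((2*n).choose (n+i-1) : ℚ) - ((2*n).choose (n+i+1) : ℚ) := by
  unfold Fq
  rw [show 2*(n+1)-1 = 2*n+1 by omega, show (n+1)+i-1 = n+i by omega,
    show (n+1)+i = n+i+1 by omega]
  have h2 : (2*n+1).choose (n+i) = (2*n).choose (n+i-1) + (2*n).choose (n+i) := by
    have h := Nat.choose_succ_succ (2*n) (n+i-1)
    simp only [Nat.succ_eq_add_one] at h
    rw [show n+i-1+1 = n+i by omega] at h
    exact h
  have h3 : (2*n+1).choose (n+i+1) = (2*n).choose (n+i) + (2*n).choose (n+i+1) :=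
    Nat.choose_succ_succ (2*n) (n+i)
  rw [h2, h3]
  push_cast
  ring

lemma key' (i : ℕ) (hi : 1 ≤ i) :
    ∀ n j, ∑ m ∈ Finset.Icc i n, ((2*(n-m)).choose ((n-m)+j) : ℚ) * Fq i m
      = ((2*n).choose (n+i+j) : ℚ) := by
  intro n
  induction n with
  | zero =>
    intro j
    rw [Finset.Icc_eq_empty (by omega : ¬ i ≤ 0)]
    rw [Nat.choose_eq_zero_of_lt (by omega)]
    simp
  | succ n IH =>
    intro j
    by_cases hile : i ≤ n + 1
    · rw [Finset.sum_Icc_succ_top hile]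
      rw [show (n+1)-(n+1) = 0 by omega]
      match j with
      | 0 =>
        have hsum : ∑ m ∈ Finset.Icc i n, ((2*((n+1)-m)).choose (((n+1)-m)+0) : ℚ) * Fq i m
            = ∑ m ∈ Finset.Icc i n,
                (2*(((2*(n-m)).choose ((n-m)+0) : ℚ) * Fq i m)
                 + 2*(((2*(n-m)).choose ((n-m)+1) : ℚ) * Fq i m)) := by
          refine Finset.sum_congr rfl (fun m hm => ?_)
          simp only [Finset.mem_Icc] at hm
          rw [show 2*((n+1)-m) = 2*(n-m)+2 by omega, show ((n+1)-m)+0 = (n-m)+1 by omega,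
            pascal0 (n-m)]
          push_cast
          ring
        rw [hsum, Finset.sum_add_distrib, ← Finset.mul_sum, ← Finset.mul_sum, IH 0, IH 1]
        simp only [Nat.add_zero, Nat.mul_zero, Nat.choose_self, Nat.cast_one, one_mul]
        rw [F_top i n hi]
        have hp : ((2*(n+1)).choose (n+1+i) : ℚ)
            = ((2*n).choose (n+i-1) : ℚ) + 2*((2*n).choose (n+i) : ℚ)
              + ((2*n).choose (n+i+1) : ℚ) := by
          rw [show 2*(n+1) = 2*n+2 by omega, show n+1+i = n+(i-1)+2 by omega,
            show n+i-1 = n+(i-1) by omega, show n+i+1 = n+(i-1)+2 by omega,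
            show n+i = n+(i-1)+1 by omega]
          exact_mod_cast pascal2 n (i-1)
        rw [hp]
        ring_nf
      | (j'+1) =>
        have hsum : ∑ m ∈ Finset.Icc i n, ((2*((n+1)-m)).choose (((n+1)-m)+(j'+1)) : ℚ) * Fq i m
            = ∑ m ∈ Finset.Icc i n,
                ((((2*(n-m)).choose ((n-m)+j') : ℚ) * Fq i m
                 + 2*(((2*(n-m)).choose ((n-m)+(j'+1)) : ℚ) * Fq i m))
                 + (((2*(n-m)).choose ((n-m)+(j'+2)) : ℚ) * Fq i m)) := by
          refine Finset.sum_congr rfl (fun m hm => ?_)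
          simp only [Finset.mem_Icc] at hm
          rw [show 2*((n+1)-m) = 2*(n-m)+2 by omega,
            show ((n+1)-m)+(j'+1) = (n-m)+j'+2 by omega,
            pascal2 (n-m) j']
          push_cast
          ring
        rw [hsum, Finset.sum_add_distrib, Finset.sum_add_distrib, ← Finset.mul_sum,
          IH j', IH (j'+1), IH (j'+2)]
        rw [show (0:ℕ)+(j'+1) = j'+1 by omega]
        rw [Nat.choose_eq_zero_of_lt (by omega : 2*0 < j'+1)]
        have hp : ((2*(n+1)).choose ((n+1)+i+(j'+1)) : ℚ)
            = ((2*n).choose (n+i+j') : ℚ) + 2*((2*n).choose (n+i+(j'+1)) : ℚ)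
              + ((2*n).choose (n+i+(j'+2)) : ℚ) := by
          rw [show 2*(n+1) = 2*n+2 by omega, show (n+1)+i+(j'+1) = n+(i+j')+2 by omega,
            show n+i+(j'+2) = n+(i+j')+2 by omega, show n+i+(j'+1) = n+(i+j')+1 by omega,
            show n+i+j' = n+(i+j') by omega]
          exact_mod_cast pascal2 n (i+j')
        rw [hp]
        push_cast
        ring_nf
    · rw [Finset.Icc_eq_empty (by omega : ¬ i ≤ n+1)]
      rw [Nat.choose_eq_zero_of_lt (by omega : 2*(n+1) < (n+1)+i+j)]
      simp

/-- Combinatorial identity from decomposing random walk paths from `2j` to `2i` that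
cross the origin, according to the time of the last visit to `0`:
`Σ_{m=i}^{n-j} C(2n-2m, n-m+j) · C(2m, m+i) · (i/m) = C(2n, n+i+j)`. -/
theorem crossing_paths_identity (n i j : ℕ) (hi : 1 ≤ i) (hj : 1 ≤ j) (hij : i + j ≤ n) :
    ∑ m ∈ Finset.Icc i (n - j),
        ((2*n - 2*m).choose (n - m + j) : ℚ) * ((2*m).choose (m+i) : ℚ) * ((i : ℚ) / (m : ℚ))
      = ((2*n).choose (n+i+j) : ℚ) := by
  have step1 : ∑ m ∈ Finset.Icc i (n - j),
        ((2*n - 2*m).choose (n - m + j) : ℚ) * ((2*m).choose (m+i) : ℚ) * ((i : ℚ) / (m : ℚ))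
      = ∑ m ∈ Finset.Icc i (n - j), ((2*(n-m)).choose ((n-m)+j) : ℚ) * Fq i m := by
    refine Finset.sum_congr rfl (fun m hm => ?_)
    simp only [Finset.mem_Icc] at hm
    rw [show 2*n - 2*m = 2*(n-m) by omega]
    rw [mul_assoc, term_eq i m hi hm.1]
  rw [step1]
  have step2 : ∑ m ∈ Finset.Icc i (n - j), ((2*(n-m)).choose ((n-m)+j) : ℚ) * Fq i m
      = ∑ m ∈ Finset.Icc i n, ((2*(n-m)).choose ((n-m)+j) : ℚ) * Fq i m := by
    refine Finset.sum_subset (Finset.Icc_subset_Icc_right (by omega)) (fun m hm hm' => ?_)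
    simp only [Finset.mem_Icc] at hm hm'
    rw [Nat.choose_eq_zero_of_lt (by omega : 2*(n-m) < (n-m)+j)]
    simp
  rw [step2, key' i hi n j]
end

section
/- Consider the random walk 𝐒 on the spider SP(N) with N legs, started at the origin, where from the origin the walk moves to the first vertex of leg j with probability p_j (Σ p_j = 1), and on each leg it moves up or down with probability 1/2 each. Then for integers n ≥ 1, k ≥ 0, 1 ≤ j ≤ n, and any leg ℓ, the probability that the walk is at vertex v(2j, ℓ) at time 2n+2k, given it is at the origin at time 2k, equals 2·p_ℓ·P(S(2n) = 2j), where S is a simple symmetric random walk on ℤ. -/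
/-!
The Markov property is only assumed along full histories, and `Y` is not assumed measurable.
Countable subadditivity still bounds the probability of following a history and then being at `v`
at a later time by the `t`-step kernel weight; these bounds sum to the probability of the history,
so they are all equalities. Taking the trivial history shows that `{Y t = v}` has probability
`K^t(origin, v)`; as these sum to one, the events `{Y t = v}` are null-measurable, and conditioning
on `{Y c = origin}` splits over the countably many histories up to time `c`.

From the origin, the height of the spider walk is a reflected simple random walk and the leg is
chosen independently with law `p`, so by induction on `t` the origin has weight `P(S t = 0)` and the
vertex at height `m` on leg `ℓ` has weight `2 p_ℓ P(S t = m)`.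
-/

open MeasureTheory ProbabilityTheory ENNReal

/-- A vertex of the spider `SP(N)`: `none` is the origin, and `some (j, r)` is the vertex
at height `r+1` on leg `j`. -/
abbrev SpiderVertex (N : ℕ) := Option (Fin N × ℕ)

/-- One-step transition probabilities of the random walk on the spider `SP(N)`:
from the origin it moves to the first vertex of leg `j` with probability `p j`;
from any other vertex it moves one step up or one step down its leg with
probability `1/2` each. -/
noncomputable def spiderKernel {N : ℕ} (p : Fin N → ℝ) :
    SpiderVertex N → SpiderVertex N → ℝ≥0∞
  | none, none => 0
  | none, some (j, r) => if r = 0 then ENNReal.ofReal (p j) else 0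
  | some (_, r), none => if r = 0 then 1/2 else 0
  | some (j, r), some (j', r') => if j' = j ∧ (r' + 1 = r ∨ r' = r + 1) then 1/2 else 0

open Set Function

section MeasureLemmas

variable {Ω : Type*} [MeasurableSpace Ω] {μ : Measure Ω}

theorem measure_eq_of_le_of_tsum_le {ι : Type*} [Countable ι] {s : Set Ω} {E : ι → Set Ω}
    {b : ι → ℝ≥0∞} (hs : s ⊆ ⋃ i, E i) (hE : ∀ i, μ (E i) ≤ b i) (hb : ∑' i, b i ≤ μ s)
    (hμs : μ s ≠ ∞) (i : ι) : μ (E i) = b i := by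
  refine (hE i).antisymm (not_lt.1 fun hlt => ?_)
  have hfin : ∑' j, μ (E j) ≠ ∞ :=
    ne_top_of_le_ne_top (ne_top_of_le_ne_top hμs hb) (ENNReal.tsum_le_tsum hE)
  exact (ENNReal.tsum_lt_tsum hfin hE hlt).not_ge
    (hb.trans ((measure_mono hs).trans (measure_iUnion_le E)))

theorem nullMeasurableSet_of_measure_add_measure_compl_le [IsFiniteMeasure μ] {s : Set Ω}
    (h : μ s + μ sᶜ ≤ μ univ) : NullMeasurableSet s μ := by
  set t := toMeasurable μ s
  set t' := toMeasurable μ sᶜ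
  have hcover : t ∪ t' = univ := eq_univ_of_forall fun ω =>
    (em (ω ∈ s)).imp (subset_toMeasurable μ s ·) (subset_toMeasurable μ sᶜ ·)
  have hoverlap : μ (t ∩ t') = 0 := by
    have := measure_union_add_inter (μ := μ) t (measurableSet_toMeasurable μ sᶜ)
    rw [hcover, measure_toMeasurable, measure_toMeasurable] at this
    exact le_antisymm ((ENNReal.add_le_add_iff_left (measure_ne_top μ univ)).1
      (by rw [this, add_zero]; exact h)) zero_le
  refine (measurableSet_toMeasurable μ s).nullMeasurableSet.congr ?_
  rw [ae_eq_set]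
  constructor
  · refine measure_mono_null ?_ hoverlap
    exact fun ω hω => ⟨hω.1, subset_toMeasurable μ sᶜ hω.2⟩
  · rw [sdiff_eq_empty.2 (subset_toMeasurable μ s), measure_empty]

theorem nullMeasurableSet_preimage_singleton_of_tsum_le {α : Type*} [Countable α]
    [IsFiniteMeasure μ] {f : Ω → α} (h : ∑' a, μ (f ⁻¹' {a}) ≤ μ univ) (a : α) :
    NullMeasurableSet (f ⁻¹' {a}) μ := by
  refine nullMeasurableSet_of_measure_add_measure_compl_le (le_trans ?_ h)
  rw [← ENNReal.summable.tsum_add_tsum_compl (s := {a}) ENNReal.summable,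
    tsum_singleton a (fun b => μ (f ⁻¹' {b})), ← preimage_compl]
  have hcover : f ⁻¹' {a}ᶜ ⊆ ⋃ b : ({a}ᶜ : Set α), f ⁻¹' {(b : α)} := fun ω hω =>
    mem_iUnion.2 ⟨⟨f ω, hω⟩, rfl⟩
  exact add_le_add_right ((measure_mono (μ := μ) hcover).trans (measure_iUnion_le _)) _

theorem measure_eq_tsum_inter_of_iUnion_eq_univ {ι : Type*} [Countable ι] {P : ι → Set Ω}
    (hP : ∀ i, NullMeasurableSet (P i) μ) (hd : Pairwise (Disjoint on P))
    (hcover : ⋃ i, P i = univ) {G : Set Ω} (hG : NullMeasurableSet G μ) :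
    μ G = ∑' i, μ (G ∩ P i) := by
  rw [← measure_iUnion₀ (μ := μ)
      (fun i j hij => ((hd hij).mono inter_subset_right inter_subset_right).aedisjoint)
      (fun i => hG.inter (hP i)), ← inter_iUnion, hcover, inter_univ]

end MeasureLemmas

section KernelPow

variable {α : Type*} [DecidableEq α] (K : α → α → ℝ≥0∞)

noncomputable def kernelPow : ℕ → α → α → ℝ≥0∞
  | 0, x, y => if x = y then 1 else 0
  | t + 1, x, y => ∑' z, K x z * kernelPow t z y

theorem kernelPow_succ' (t : ℕ) (x y : α) :
    kernelPow K (t + 1) x y = ∑' z, kernelPow K t x z * K z y := by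
  induction t generalizing x with
  | zero => simp [kernelPow]
  | succ t ih =>
    calc kernelPow K (t + 2) x y = ∑' z, K x z * ∑' w, kernelPow K t z w * K w y := by
          simp_rw [← ih]; rfl
    _ = ∑' w, (∑' z, K x z * kernelPow K t z w) * K w y := by
          simp_rw [← ENNReal.tsum_mul_left, ← ENNReal.tsum_mul_right, mul_assoc]
          exact ENNReal.tsum_comm
    _ = ∑' w, kernelPow K (t + 1) x w * K w y := rfl

theorem tsum_kernelPow (hK : ∀ x, ∑' y, K x y = 1) (t : ℕ) (x : α) :
    ∑' y, kernelPow K t x y = 1 := by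
  induction t generalizing x with
  | zero => simp [kernelPow]
  | succ t ih =>
    simp only [kernelPow]
    rw [ENNReal.tsum_comm]
    simp_rw [ENNReal.tsum_mul_left, ih, mul_one, hK]

end KernelPow

section MarkovChain

variable {Ω α : Type*} {Y : ℕ → Ω → α}

def historySet (Y : ℕ → Ω → α) (n : ℕ) (h : ℕ → α) : Set Ω :=
  {ω | ∀ i ≤ n, Y i ω = h i}

theorem historySet_succ_update [DecidableEq α] (n : ℕ) (h : ℕ → α) (u : α) :
    historySet Y (n + 1) (update h (n + 1) u) = historySet Y n h ∩ {ω | Y (n + 1) ω = u} := by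
  ext ω
  simp only [historySet, mem_inter_iff]
  constructor
  · intro hω
    refine ⟨fun i hi => ?_, by simpa using hω (n + 1) le_rfl⟩
    simpa [update_of_ne (show i ≠ n + 1 by omega)] using hω i (by omega)
  · rintro ⟨hω, hu⟩ i hi
    rcases (Nat.le_succ_iff.1 hi) with hi | rfl
    · simpa [update_of_ne (show i ≠ n + 1 by omega)] using hω i hi
    · simpa using hu

variable [MeasurableSpace Ω] {μ : Measure Ω} {K : α → α → ℝ≥0∞}

def IsMarkovChain (μ : Measure Ω) (K : α → α → ℝ≥0∞) (Y : ℕ → Ω → α) : Prop :=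
  ∀ n h v, μ (historySet Y n h) ≠ 0 →
    μ[|historySet Y n h] {ω | Y (n + 1) ω = v} = K (h n) v

theorem IsMarkovChain.measure_historySet_inter_le [IsFiniteMeasure μ]
    (hY : IsMarkovChain μ K Y) (n : ℕ) (h : ℕ → α) (v : α) :
    μ (historySet Y n h ∩ {ω | Y (n + 1) ω = v}) ≤ μ (historySet Y n h) * K (h n) v := by
  by_cases h0 : μ (historySet Y n h) = 0
  · simp [measure_mono_null inter_subset_left h0]
  have hstep := hY n h v h0
  rw [ProbabilityTheory.cond, Measure.smul_apply, smul_eq_mul] at hstep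
  rw [← hstep, ENNReal.mul_inv_cancel_left h0 (measure_ne_top μ _), inter_comm]
  exact Measure.le_restrict_apply _ _

variable [Countable α] [DecidableEq α]

theorem IsMarkovChain.measure_historySet_inter [IsFiniteMeasure μ] (hY : IsMarkovChain μ K Y)
    (hK : ∀ x, ∑' y, K x y = 1) (t c : ℕ) (h : ℕ → α) (v : α) :
    μ (historySet Y c h ∩ {ω | Y (c + t) ω = v})
      = μ (historySet Y c h) * kernelPow K t (h c) v := by
  induction t generalizing c h v with
  | zero =>
    rw [add_zero]
    by_cases hv : h c = v
    · have hsub : historySet Y c h ⊆ {ω | Y c ω = v} := fun ω hω => (hω c le_rfl).trans hv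
      simp [kernelPow, hv, inter_eq_left.2 hsub]
    · have hdisj : historySet Y c h ∩ {ω | Y c ω = v} = ∅ :=
        eq_empty_of_forall_notMem fun ω hω => hv ((hω.1 c le_rfl).symm.trans hω.2)
      simp [kernelPow, hv, hdisj]
  | succ t ih =>
    -- Splitting on `Y (c + 1)` only gives `≤`, but the bounds sum to `μ (historySet Y c h)`.
    refine measure_eq_of_le_of_tsum_le
      (E := fun w => historySet Y c h ∩ {ω | Y (c + (t + 1)) ω = w})
      (b := fun w => μ (historySet Y c h) * kernelPow K (t + 1) (h c) w)
      (fun ω hω => mem_iUnion.2 ⟨Y (c + (t + 1)) ω, hω, rfl⟩)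
      (fun w => ?_) ?_ (measure_ne_top μ _) v
    · have hcover : historySet Y c h ∩ {ω | Y (c + (t + 1)) ω = w}
          ⊆ ⋃ u, historySet Y (c + 1) (update h (c + 1) u) ∩ {ω | Y (c + 1 + t) ω = w} :=
        fun ω hω => mem_iUnion.2 ⟨Y (c + 1) ω, by
          rw [historySet_succ_update, add_right_comm]; exact ⟨⟨hω.1, rfl⟩, hω.2⟩⟩
      calc μ (historySet Y c h ∩ {ω | Y (c + (t + 1)) ω = w})
          ≤ ∑' u, μ (historySet Y (c + 1) (update h (c + 1) u) ∩ {ω | Y (c + 1 + t) ω = w}) :=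
            (measure_mono hcover).trans (measure_iUnion_le _)
        _ = ∑' u, μ (historySet Y (c + 1) (update h (c + 1) u)) * kernelPow K t u w := by
            simp_rw [ih, update_self]
        _ ≤ ∑' u, μ (historySet Y c h) * K (h c) u * kernelPow K t u w := by
            gcongr with u
            rw [historySet_succ_update]
            exact hY.measure_historySet_inter_le c h u
        _ = μ (historySet Y c h) * kernelPow K (t + 1) (h c) w := by
            rw [kernelPow, ← ENNReal.tsum_mul_left]
            simp_rw [mul_assoc]
    · rw [ENNReal.tsum_mul_left, tsum_kernelPow K hK, mul_one]

theorem IsMarkovChain.measure_eq_kernelPow [IsProbabilityMeasure μ] (hY : IsMarkovChain μ K Y)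
    (hK : ∀ x, ∑' y, K x y = 1) {x₀ : α} (hY0 : ∀ ω, Y 0 ω = x₀) (t : ℕ) (v : α) :
    μ {ω | Y t ω = v} = kernelPow K t x₀ v := by
  have huniv : historySet Y 0 (fun _ => x₀) = univ :=
    eq_univ_of_forall fun ω i hi => by rw [Nat.le_zero.1 hi, hY0]
  simpa [huniv] using hY.measure_historySet_inter hK t 0 (fun _ => x₀) v

theorem IsMarkovChain.nullMeasurableSet_eq [IsProbabilityMeasure μ] (hY : IsMarkovChain μ K Y)
    (hK : ∀ x, ∑' y, K x y = 1) {x₀ : α} (hY0 : ∀ ω, Y 0 ω = x₀) (t : ℕ) (v : α) :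
    NullMeasurableSet {ω | Y t ω = v} μ := by
  refine nullMeasurableSet_preimage_singleton_of_tsum_le (μ := μ) (f := Y t) (le_of_eq ?_) v
  rw [measure_univ, ← tsum_kernelPow K hK t x₀]
  exact tsum_congr (hY.measure_eq_kernelPow hK hY0 t)

theorem IsMarkovChain.measure_inter_inter_historySet [IsFiniteMeasure μ]
    (hY : IsMarkovChain μ K Y) (hK : ∀ x, ∑' y, K x y = 1) (c t : ℕ) (h : ℕ → α) (u v : α) :
    μ ({ω | Y c ω = u} ∩ {ω | Y (c + t) ω = v} ∩ historySet Y c h)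
      = μ ({ω | Y c ω = u} ∩ historySet Y c h) * kernelPow K t u v := by
  by_cases hu : h c = u
  · have hsub : historySet Y c h ⊆ {ω | Y c ω = u} := fun ω hω => (hω c le_rfl).trans hu
    rw [inter_right_comm, inter_eq_right.2 hsub, hY.measure_historySet_inter hK, hu]
  · have hdisj : {ω | Y c ω = u} ∩ historySet Y c h = ∅ :=
      eq_empty_of_forall_notMem fun ω hω => hu ((hω.2 c le_rfl).symm.trans hω.1)
    rw [inter_right_comm, hdisj, empty_inter, measure_empty, zero_mul]

theorem IsMarkovChain.measure_inter_eq_mul_kernelPow [IsProbabilityMeasure μ]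
    (hY : IsMarkovChain μ K Y)
    (hK : ∀ x, ∑' y, K x y = 1) {x₀ : α} (hY0 : ∀ ω, Y 0 ω = x₀) (c t : ℕ) (u v : α) :
    μ ({ω | Y c ω = u} ∩ {ω | Y (c + t) ω = v}) = μ {ω | Y c ω = u} * kernelPow K t u v := by
  set P : (Fin (c + 1) → α) → Set Ω := fun f => historySet Y c (fun i => f (Fin.ofNat (c + 1) i))
  have hnull : ∀ f, NullMeasurableSet (P f) μ := fun f => by
    simp only [P, historySet, ofPred_forall]
    exact .iInter fun i => .iInter fun _ => hY.nullMeasurableSet_eq hK hY0 i _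
  have hdisj : Pairwise (Disjoint on P) := fun f g hfg => disjoint_left.2 fun ω hf hg =>
    hfg <| funext fun i => by
      simpa using (hf i (Nat.lt_succ_iff.1 i.isLt)).symm.trans (hg i (Nat.lt_succ_iff.1 i.isLt))
  have hcover : ⋃ f, P f = univ := eq_univ_of_forall fun ω => mem_iUnion.2
    ⟨fun i => Y i ω, fun i hi => by simp [Nat.mod_eq_of_lt (Nat.lt_succ_of_le hi)]⟩
  have hA := hY.nullMeasurableSet_eq hK hY0 c u
  rw [measure_eq_tsum_inter_of_iUnion_eq_univ hnull hdisj hcover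
      (hA.inter (hY.nullMeasurableSet_eq hK hY0 (c + t) v)),
    measure_eq_tsum_inter_of_iUnion_eq_univ hnull hdisj hcover hA, ← ENNReal.tsum_mul_right]
  exact tsum_congr fun f => hY.measure_inter_inter_historySet hK c t _ u v

theorem IsMarkovChain.cond_eq_kernelPow [IsProbabilityMeasure μ] (hY : IsMarkovChain μ K Y)
    (hK : ∀ x, ∑' y, K x y = 1) {x₀ : α} (hY0 : ∀ ω, Y 0 ω = x₀) {c : ℕ} {u : α}
    (hu : μ {ω | Y c ω = u} ≠ 0) (t : ℕ) (v : α) :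
    μ[|{ω | Y c ω = u}] {ω | Y (c + t) ω = v} = kernelPow K t u v := by
  rw [ProbabilityTheory.cond, Measure.smul_apply, smul_eq_mul,
    Measure.restrict_apply₀' (hY.nullMeasurableSet_eq hK hY0 c u), inter_comm,
    hY.measure_inter_eq_mul_kernelPow hK hY0, ← mul_assoc,
    ENNReal.inv_mul_cancel hu (measure_ne_top μ _), one_mul]

end MarkovChain

section RandomWalk

noncomputable def simpleRandomWalkLaw : ℕ → ℤ → ℝ≥0∞
  | 0, z => if z = 0 then 1 else 0
  | t + 1, z => simpleRandomWalkLaw t (z - 1) / 2 + simpleRandomWalkLaw t (z + 1) / 2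

theorem simpleRandomWalkLaw_neg (t : ℕ) (z : ℤ) :
    simpleRandomWalkLaw t (-z) = simpleRandomWalkLaw t z := by
  induction t generalizing z with
  | zero => simp [simpleRandomWalkLaw]
  | succ t ih =>
    rw [simpleRandomWalkLaw, simpleRandomWalkLaw, add_comm, ← ih (z + 1), ← ih (z - 1)]
    ring_nf

theorem simpleRandomWalkLaw_two_mul_zero_ne_zero (k : ℕ) :
    simpleRandomWalkLaw (2 * k) 0 ≠ 0 := by
  induction k with
  | zero => simp [simpleRandomWalkLaw]
  | succ k ih =>
    rw [show 2 * (k + 1) = 2 * k + 1 + 1 by ring]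
    simp [simpleRandomWalkLaw, ih]

variable {Ω : Type*} [MeasurableSpace Ω] {μ : Measure Ω} [IsProbabilityMeasure μ]
  {X S : ℕ → Ω → ℤ}

theorem measure_partialSum_succ (hmeas : ∀ i, Measurable (X i)) (hindep : iIndepFun X μ)
    (h1 : ∀ i, μ {ω | X i ω = 1} = 1/2) (h2 : ∀ i, μ {ω | X i ω = -1} = 1/2)
    (hS : ∀ n ω, S n ω = ∑ i ∈ Finset.range n, X i ω) (t : ℕ) (z : ℤ) :
    μ {ω | S (t + 1) ω = z} = μ {ω | S t ω = z - 1} / 2 + μ {ω | S t ω = z + 1} / 2 := by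
  have hSt_meas : Measurable (S t) := by
    rw [funext (hS t)]; exact Finset.measurable_sum _ fun i _ => hmeas i
  have hindep_t : IndepFun (S t) (X t) μ := by
    convert hindep.indepFun_sum_range_succ hmeas t using 1; ext ω; simp [hS]
  have hstep : ∀ ω, S (t + 1) ω = S t ω + X t ω := fun ω => by
    simp [hS, Finset.sum_range_succ]
  have hdisj : Disjoint (X t ⁻¹' {1}) (X t ⁻¹' {-1}) :=
    (disjoint_singleton.2 (by decide)).preimage _
  have hsign : μ (X t ⁻¹' {1} ∪ X t ⁻¹' {-1})ᶜ = 0 := by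
    rw [prob_compl_eq_zero_iff ((hmeas t (measurableSet_singleton _)).union
        (hmeas t (measurableSet_singleton _))),
      measure_union hdisj (hmeas t (measurableSet_singleton _))]
    exact (congrArg₂ (· + ·) (h1 t) (h2 t)).trans (ENNReal.add_halves 1)
  calc μ {ω | S (t + 1) ω = z}
      = μ ({ω | S (t + 1) ω = z} ∩ (X t ⁻¹' {1} ∪ X t ⁻¹' {-1})) :=
        (measure_inter_conull hsign).symm
    _ = μ ((S t ⁻¹' {z - 1} ∩ X t ⁻¹' {1}) ∪ (S t ⁻¹' {z + 1} ∩ X t ⁻¹' {-1})) := by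
        congr 1; ext ω; simp [hstep]; omega
    _ = μ (S t ⁻¹' {z - 1}) * μ (X t ⁻¹' {1}) + μ (S t ⁻¹' {z + 1}) * μ (X t ⁻¹' {-1}) := by
        rw [measure_union (hdisj.mono inter_subset_right inter_subset_right)
            ((hSt_meas (measurableSet_singleton _)).inter (hmeas t (measurableSet_singleton _))),
          hindep_t.measure_inter_preimage_eq_mul _ _ (measurableSet_singleton _)
            (measurableSet_singleton _),
          hindep_t.measure_inter_preimage_eq_mul _ _ (measurableSet_singleton _)
            (measurableSet_singleton _)]
    _ = _ := by
        simp only [preimage, mem_singleton_iff, h1, h2, div_eq_mul_inv, one_mul]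

theorem measure_partialSum_eq_simpleRandomWalkLaw (hmeas : ∀ i, Measurable (X i))
    (hindep : iIndepFun X μ) (h1 : ∀ i, μ {ω | X i ω = 1} = 1/2)
    (h2 : ∀ i, μ {ω | X i ω = -1} = 1/2) (hS : ∀ n ω, S n ω = ∑ i ∈ Finset.range n, X i ω)
    (t : ℕ) (z : ℤ) : μ {ω | S t ω = z} = simpleRandomWalkLaw t z := by
  induction t generalizing z with
  | zero => by_cases hz : z = 0 <;> simp [hS, simpleRandomWalkLaw, hz, eq_comm]
  | succ t ih => rw [measure_partialSum_succ hmeas hindep h1 h2 hS, ih, ih, simpleRandomWalkLaw]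

end RandomWalk

section Spider

variable {N : ℕ} {p : Fin N → ℝ}

theorem tsum_spiderKernel (hp0 : ∀ j, 0 ≤ p j) (hp : ∑ j, p j = 1) (u : SpiderVertex N) :
    ∑' v, spiderKernel p u v = 1 := by
  rcases u with _ | ⟨j, _ | r⟩
  · rw [tsum_eq_sum (s := Finset.univ.image fun j => some (j, 0)) ?_,
      Finset.sum_image fun _ _ _ _ h => by simpa using h]
    · simp [spiderKernel, ← ENNReal.ofReal_sum_of_nonneg fun j _ => hp0 j, hp]
    · rintro (_ | ⟨j, _ | r⟩) hv <;> simp_all [spiderKernel]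
  · rw [tsum_eq_sum (s := {none, some (j, 1)}) ?_, Finset.sum_pair (by simp)]
    · simp [spiderKernel, ENNReal.inv_two_add_inv_two]
    · rintro (_ | ⟨j', r'⟩) hv <;> simp_all [spiderKernel]
  · rw [tsum_eq_sum (s := {some (j, r), some (j, r + 2)}) ?_, Finset.sum_pair (by simp)]
    · simp [spiderKernel, ENNReal.inv_two_add_inv_two]
    · rintro (_ | ⟨j', r'⟩) hv <;> simp_all [spiderKernel]

theorem tsum_mul_spiderKernel_none (F : SpiderVertex N → ℝ≥0∞) :
    ∑' u, F u * spiderKernel p u none = ∑ j, F (some (j, 0)) / 2 := by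
  rw [tsum_eq_sum (s := Finset.univ.image fun j => some (j, 0)) ?_,
    Finset.sum_image fun _ _ _ _ h => by simpa using h]
  · simp [spiderKernel, div_eq_mul_inv]
  · rintro (_ | ⟨j, _ | r⟩) hv <;> simp_all [spiderKernel]

theorem tsum_mul_spiderKernel_some_zero (F : SpiderVertex N → ℝ≥0∞) (l : Fin N) :
    ∑' u, F u * spiderKernel p u (some (l, 0))
      = F none * ENNReal.ofReal (p l) + F (some (l, 1)) / 2 := by
  rw [tsum_eq_sum (s := {none, some (l, 1)}) ?_, Finset.sum_pair (by simp)]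
  · simp [spiderKernel, div_eq_mul_inv]
  · rintro (_ | ⟨j, r⟩) hv
    · simp at hv
    · simp_all [spiderKernel]; grind

theorem tsum_mul_spiderKernel_some_succ (F : SpiderVertex N → ℝ≥0∞) (l : Fin N) (m : ℕ) :
    ∑' u, F u * spiderKernel p u (some (l, m + 1))
      = F (some (l, m)) / 2 + F (some (l, m + 2)) / 2 := by
  rw [tsum_eq_sum (s := {some (l, m), some (l, m + 2)}) ?_, Finset.sum_pair (by simp)]
  · simp [spiderKernel, div_eq_mul_inv]
  · rintro (_ | ⟨j, r⟩) hv
    · simp_all [spiderKernel]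
    · simp_all [spiderKernel]; grind

noncomputable def spiderLaw (p : Fin N → ℝ) (t : ℕ) : SpiderVertex N → ℝ≥0∞
  | none => simpleRandomWalkLaw t 0
  | some (l, m) => 2 * ENNReal.ofReal (p l) * simpleRandomWalkLaw t (m + 1)

theorem kernelPow_spiderKernel_none (hp0 : ∀ j, 0 ≤ p j) (hp : ∑ j, p j = 1) (t : ℕ)
    (v : SpiderVertex N) : kernelPow (spiderKernel p) t none v = spiderLaw p t v := by
  induction t generalizing v with
  | zero =>
    rcases v with _ | ⟨l, m⟩
    · simp [kernelPow, spiderLaw, simpleRandomWalkLaw]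
    · simp [kernelPow, spiderLaw, simpleRandomWalkLaw]; omega
  | succ t ih =>
    have hcancel : ∀ x y : ℝ≥0∞, 2 * x * y / 2 = x * y := fun x y => by
      rw [mul_assoc, mul_comm, ENNReal.mul_div_cancel_right two_ne_zero ofNat_ne_top]
    have hcancel' : ∀ x y : ℝ≥0∞, 2 * x * (y / 2) = x * y := fun x y => by
      rw [← mul_div_assoc, hcancel]
    rw [kernelPow_succ', funext ih]
    rcases v with _ | ⟨l, _ | m⟩
    · rw [tsum_mul_spiderKernel_none]
      simp only [spiderLaw, hcancel, ← Finset.sum_mul]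
      rw [← ENNReal.ofReal_sum_of_nonneg fun j _ => hp0 j, hp, ENNReal.ofReal_one, one_mul]
      simp [simpleRandomWalkLaw, simpleRandomWalkLaw_neg]
    · rw [tsum_mul_spiderKernel_some_zero]
      simp only [spiderLaw, simpleRandomWalkLaw, mul_add, hcancel, hcancel']
      push_cast
      ring
    · rw [tsum_mul_spiderKernel_some_succ]
      simp only [spiderLaw, simpleRandomWalkLaw, mul_add, hcancel, hcancel']
      push_cast
      ring_nf

end Spider

theorem spider_transition_from_origin_general
    {Ω Ω' : Type*} [MeasurableSpace Ω] [MeasurableSpace Ω']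
    (μ : Measure Ω) [IsProbabilityMeasure μ]
    (μ' : Measure Ω') [IsProbabilityMeasure μ']
    (N : ℕ) (p : Fin N → ℝ) (hp0 : ∀ j, 0 ≤ p j) (hp : ∑ j, p j = 1)
    -- the spider walk `Y`, a Markov chain with kernel `spiderKernel p` started at the origin
    (Y : ℕ → Ω → SpiderVertex N)
    (hY0 : ∀ ω, Y 0 ω = none)
    (hMarkov : ∀ (n : ℕ) (h : ℕ → SpiderVertex N) (v : SpiderVertex N),
      μ {ω | ∀ i ≤ n, Y i ω = h i} ≠ 0 →
      (μ[|{ω | ∀ i ≤ n, Y i ω = h i}]) {ω | Y (n+1) ω = v} = spiderKernel p (h n) v)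
    -- a simple symmetric random walk `S` on `ℤ`
    (X : ℕ → Ω' → ℤ) (hmeas : ∀ i, Measurable (X i))
    (hindep : iIndepFun X μ')
    (h1 : ∀ i, μ' {ω | X i ω = 1} = 1/2) (h2 : ∀ i, μ' {ω | X i ω = -1} = 1/2)
    (S : ℕ → Ω' → ℤ) (hS : ∀ n ω, S n ω = ∑ i ∈ Finset.range n, X i ω)
    (n k j : ℕ) (hj : 1 ≤ j) (ℓ : Fin N) :
    ((μ[|{ω | Y (2*k) ω = none}]) {ω | Y (2*n+2*k) ω = some (ℓ, 2*j - 1)}).toReal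
      = 2 * p ℓ * (μ' {ω | S (2*n) ω = 2*j}).toReal := by
  have hY : IsMarkovChain μ (spiderKernel p) Y := hMarkov
  have hK := tsum_spiderKernel hp0 hp
  have horigin : μ {ω | Y (2 * k) ω = none} ≠ 0 := by
    rw [hY.measure_eq_kernelPow hK hY0, kernelPow_spiderKernel_none hp0 hp]
    exact simpleRandomWalkLaw_two_mul_zero_ne_zero k
  have hheight : ((2 * j - 1 : ℕ) : ℤ) + 1 = 2 * j := by omega
  rw [add_comm, hY.cond_eq_kernelPow hK hY0 horigin, kernelPow_spiderKernel_none hp0 hp,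
    measure_partialSum_eq_simpleRandomWalkLaw hmeas hindep h1 h2 hS, spiderLaw, hheight,
    ENNReal.toReal_mul, ENNReal.toReal_mul, ENNReal.toReal_ofReal (hp0 ℓ), ENNReal.toReal_ofNat]

/-- Transition probability of the spider walk from the origin:
`P(S_{2n+2k} = v(2j,ℓ) | S_{2k} = 0) = 2 p_ℓ P(S(2n) = 2j)`, where `S` is a simple
symmetric random walk on `ℤ`. -/
theorem spider_transition_from_origin
    {Ω Ω' : Type*} [MeasurableSpace Ω] [MeasurableSpace Ω']
    (μ : Measure Ω) [IsProbabilityMeasure μ]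
    (μ' : Measure Ω') [IsProbabilityMeasure μ']
    (N : ℕ) (hN : 1 ≤ N) (p : Fin N → ℝ) (hp0 : ∀ j, 0 ≤ p j) (hp : ∑ j, p j = 1)
    -- the spider walk `Y`, a Markov chain with kernel `spiderKernel p` started at the origin
    (Y : ℕ → Ω → SpiderVertex N)
    (hY0 : ∀ ω, Y 0 ω = none)
    (hMarkov : ∀ (n : ℕ) (h : ℕ → SpiderVertex N) (v : SpiderVertex N),
      μ {ω | ∀ i ≤ n, Y i ω = h i} ≠ 0 →
      (μ[|{ω | ∀ i ≤ n, Y i ω = h i}]) {ω | Y (n+1) ω = v} = spiderKernel p (h n) v)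
    -- a simple symmetric random walk `S` on `ℤ`
    (X : ℕ → Ω' → ℤ) (hmeas : ∀ i, Measurable (X i))
    (hindep : iIndepFun X μ')
    (h1 : ∀ i, μ' {ω | X i ω = 1} = 1/2) (h2 : ∀ i, μ' {ω | X i ω = -1} = 1/2)
    (S : ℕ → Ω' → ℤ) (hS : ∀ n ω, S n ω = ∑ i ∈ Finset.range n, X i ω)
    (n k j : ℕ) (hn : 1 ≤ n) (hj : 1 ≤ j) (hjn : j ≤ n) (ℓ : Fin N) :
    ((μ[|{ω | Y (2*k) ω = none}]) {ω | Y (2*n+2*k) ω = some (ℓ, 2*j - 1)}).toReal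
      = 2 * p ℓ * (μ' {ω | S (2*n) ω = 2*j}).toReal :=
  spider_transition_from_origin_general μ μ' N p hp0 hp Y hY0 hMarkov X hmeas hindep h1 h2 S hS n k
    j hj ℓ
end

section
/- Let {A_n}_{n≥1} be a sequence of events with P(A_n infinitely often) = 1, and let {C_n}_{n≥1} be a sequence of events, with the entire sequence {C_n} independent of the entire sequence {A_n}, such that for some n_0 and c > 0, P(C_n) ≥ c for all n > n_0. Then P(A_n ∩ C_n infinitely often) ≥ c. -/
/-!
Split the tail `⋃_{n ≥ M} A_n` into the disjoint pieces `D_n = A_n \ ⋃_{M ≤ k < n} A_k`.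
Each `D_n` lies in the σ-algebra of the `A`'s, so by independence
`μ (D_n ∩ C_n) = μ D_n * μ C_n ≥ c * μ D_n`; summing over `n` gives
`μ (⋃_{n ≥ M} A_n ∩ C_n) ≥ c * μ (⋃_{n ≥ M} A_n) = c`, the last step because `A_n` occurs
infinitely often almost surely. Letting `M → ∞` yields the bound for the limsup.
-/

open MeasureTheory ProbabilityTheory Filter Set
open scoped ENNReal

namespace ProbabilityTheory

variable {Ω : Type*} {m₁ m₂ m0 : MeasurableSpace Ω} {μ : Measure Ω}

theorem Indep.mul_measure_iUnion_le_measure_iUnion_inter (hm₁ : m₁ ≤ m0) (hm₂ : m₂ ≤ m0)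
    (hind : Indep m₁ m₂ μ) {E F : ℕ → Set Ω} (hE : ∀ n, MeasurableSet[m₁] (E n))
    (hF : ∀ n, MeasurableSet[m₂] (F n)) {c : ℝ≥0∞} (hc : ∀ n, c ≤ μ (F n)) :
    c * μ (⋃ n, E n) ≤ μ (⋃ n, E n ∩ F n) := by
  set D := disjointed E
  have hD : ∀ n, MeasurableSet[m₁] (D n) := MeasurableSet.disjointed hE
  have hDF : Pairwise (Function.onFun Disjoint fun n => D n ∩ F n) := fun i j hij =>
    (disjoint_disjointed E hij).mono inter_subset_left inter_subset_left
  calc c * μ (⋃ n, E n)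
      = ∑' n, c * μ (D n) := by
        rw [← iUnion_disjointed, measure_iUnion (disjoint_disjointed E) fun n => hm₁ _ (hD n),
          ENNReal.tsum_mul_left]
    _ ≤ ∑' n, μ (D n ∩ F n) := by
        refine ENNReal.tsum_le_tsum fun n => ?_
        rw [(Indep_iff _ _ μ).1 hind _ _ (hD n) (hF n), mul_comm]
        gcongr
        exact hc n
    _ = μ (⋃ n, D n ∩ F n) :=
        (measure_iUnion hDF fun n => (hm₁ _ (hD n)).inter (hm₂ _ (hF n))).symm
    _ ≤ μ (⋃ n, E n ∩ F n) :=
        measure_mono <| iUnion_mono fun n => inter_subset_inter_left _ (disjointed_subset E n)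

end ProbabilityTheory

namespace MeasureTheory

variable {α : Type*} {m : MeasurableSpace α} {μ : Measure α}

theorem measure_limsup_atTop_eq_iInf [IsFiniteMeasure μ] {s : ℕ → Set α}
    (hs : ∀ n, MeasurableSet (s n)) : μ (limsup s atTop) = ⨅ N, μ (⋃ i ≥ N, s i) := by
  rw [limsup_eq_iInf_iSup_of_nat]
  exact Antitone.measure_iInter
    (fun a b hab => biUnion_subset_biUnion_left fun i hi => hab.trans hi)
    (fun N => (MeasurableSet.biUnion (to_countable _) fun i _ => hs i).nullMeasurableSet)
    ⟨0, measure_ne_top μ _⟩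

theorem measure_iUnion_add_eq_one_of_measure_limsup_eq_one [IsProbabilityMeasure μ]
    {s : ℕ → Set α} (hs : μ (limsup s atTop) = 1) (N : ℕ) : μ (⋃ i, s (i + N)) = 1 :=
  le_antisymm prob_le_one <|
    hs ▸ measure_mono (limsup_eq_iInf_iSup_of_nat'.trans_le (iInf_le _ N))

end MeasureTheory

theorem klass_lemma_general
    {Ω : Type*} [m0 : MeasurableSpace Ω] (μ : Measure Ω) [IsProbabilityMeasure μ]
    (A C : ℕ → Set Ω) (hA : ∀ n, MeasurableSet (A n)) (hC : ∀ n, MeasurableSet (C n))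
    (hAio : μ (limsup A atTop) = 1)
    (hindep : Indep
      (MeasurableSpace.generateFrom {s | ∃ n, s = A n})
      (MeasurableSpace.generateFrom {s | ∃ n, s = C n}) μ)
    (c : ENNReal) (n₀ : ℕ) (hCn : ∀ n > n₀, c ≤ μ (C n)) :
    c ≤ μ (limsup (fun n => A n ∩ C n) atTop) := by
  have hmA := MeasurableSpace.generateFrom_le (m := m0) (s := {s | ∃ n, s = A n})
    fun _ ⟨n, hn⟩ => hn ▸ hA n
  have hmC := MeasurableSpace.generateFrom_le (m := m0) (s := {s | ∃ n, s = C n})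
    fun _ ⟨n, hn⟩ => hn ▸ hC n
  rw [measure_limsup_atTop_eq_iInf fun n => (hA n).inter (hC n)]
  refine le_iInf fun N => ?_
  set M := max N (n₀ + 1)
  have htail : c ≤ μ (⋃ i, A (i + M) ∩ C (i + M)) := by
    simpa only [measure_iUnion_add_eq_one_of_measure_limsup_eq_one hAio M, mul_one] using
      hindep.mul_measure_iUnion_le_measure_iUnion_inter hmA hmC
        (fun i => MeasurableSpace.measurableSet_generateFrom ⟨i + M, rfl⟩)
        (fun i => MeasurableSpace.measurableSet_generateFrom ⟨i + M, rfl⟩)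
        (fun i => hCn (i + M) (by omega))
  rw [← iUnion_ge_eq_iUnion_nat_add (fun i => A i ∩ C i)] at htail
  exact htail.trans <| measure_mono <| biUnion_subset_biUnion_left fun i (hi : M ≤ i) =>
    show N ≤ i from (le_max_left _ _).trans hi

/-- Klass's lemma: if `P(A_n i.o.) = 1`, the sequence of events `{C_n}` is independent of
the sequence `{A_n}`, and `P(C_n) ≥ c > 0` for all `n > n₀`, then `P(A_n ∩ C_n i.o.) ≥ c`. -/
theorem klass_lemma
    {Ω : Type*} [m0 : MeasurableSpace Ω] (μ : Measure Ω) [IsProbabilityMeasure μ]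
    (A C : ℕ → Set Ω) (hA : ∀ n, MeasurableSet (A n)) (hC : ∀ n, MeasurableSet (C n))
    (hAio : μ (limsup A atTop) = 1)
    (hindep : Indep
      (MeasurableSpace.generateFrom {s | ∃ n, s = A n})
      (MeasurableSpace.generateFrom {s | ∃ n, s = C n}) μ)
    (c : ENNReal) (hc : 0 < c) (n₀ : ℕ) (hCn : ∀ n > n₀, c ≤ μ (C n)) :
    c ≤ μ (limsup (fun n => A n ∩ C n) atTop) :=
  klass_lemma_general (m0 := m0) μ A C hA hC hAio hindep c n₀ hCn
end

section
/- For each N, place n(N) = ⌊N·log N + N·x⌋ balls independently and uniformly at random into N urns, where x is a fixed real. Then the probability that every urn contains at least one ball converges, as N → ∞, to exp(−exp(−x)). -/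
/-!
By inclusion–exclusion over the set of empty urns, the probability that `n` balls leave no urn
empty is `∑ₖ (-1)ᵏ C(N,k) (1 - k/N)ⁿ`. If `n/N - log N → x`, the expected number of empty urns,
roughly `N e^{-n/N}`, tends to `e^{-x}`, and the `k`-th term tends to `(-e^{-x})ᵏ/k!` while being
bounded by `(e^{-x} + 1)ᵏ/k!`. Tannery's theorem then lets the limit pass through the sum, which
becomes the exponential series of `-e^{-x}`.
-/

open Filter Finset Topology Function Real Asymptotics

theorem card_surjective_eq_sum (α β : Type*) [Fintype α] [Fintype β] :
    (Nat.card {f : α → β // Surjective f} : ℤ) =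
      ∑ k ∈ range (Fintype.card β + 1),
        (-1) ^ k * (Fintype.card β).choose k * ((Fintype.card β : ℤ) - k) ^ Fintype.card α := by
  classical
  have hsurj : ({f : α → β | Surjective f} : Finset (α → β)) =
      univ.inf fun b => ({f | ∀ a, f a ≠ b} : Finset (α → β))ᶜ := by
    ext f; rw [Finset.mem_filter]; simp [Finset.mem_inf, Surjective]
  have hmiss (t : Finset β) : (t.inf fun b => ({f | ∀ a, f a ≠ b} : Finset (α → β))) =
      Fintype.piFinset fun _ => tᶜ := by
    ext f
    simpa [Finset.mem_inf] using ⟨fun h a ha => h _ ha a rfl, fun h b hb a hab => h a (hab ▸ hb)⟩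
  rw [Nat.card_eq_fintype_card, Fintype.card_subtype, hsurj, inclusion_exclusion_card_inf_compl]
  simp_rw [hmiss, Fintype.card_piFinset, prod_const, card_compl, card_univ]
  rw [sum_powerset_apply_card (fun k => (-1 : ℤ) ^ k * ((Fintype.card β - k) ^ Fintype.card α : ℕ)),
    card_univ]
  refine sum_congr rfl fun k hk => ?_
  rw [nsmul_eq_mul, Nat.cast_pow, Nat.cast_sub (Nat.lt_succ_iff.mp (mem_range.mp hk))]
  ring

theorem card_surjective_div_card_pow_eq_tsum (α β : Type*) [Fintype α] [Fintype β] [Nonempty β] :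
    (Nat.card {f : α → β // Surjective f} : ℝ) / Fintype.card β ^ Fintype.card α =
      ∑' k : ℕ, (-1) ^ k * (Fintype.card β).choose k *
        (1 - k / Fintype.card β : ℝ) ^ Fintype.card α := by
  set N := Fintype.card β
  set n := Fintype.card α
  have hN : (N : ℝ) ≠ 0 := by simp [N, Fintype.card_ne_zero]
  rw [tsum_eq_sum (s := range (N + 1)) fun k hk => by
    simp [Nat.choose_eq_zero_of_lt (by simpa [Nat.lt_succ_iff] using hk : N < k)]]
  have h := congrArg (Int.cast : ℤ → ℝ) (card_surjective_eq_sum α β)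
  push_cast at h
  rw [h, sum_div]
  refine sum_congr rfl fun k _ => ?_
  rw [one_sub_div hN, div_pow]
  ring

theorem abs_log_one_sub_add_le {t : ℝ} (ht : |t| ≤ 1 / 2) : |log (1 - t) + t| ≤ 2 * t ^ 2 := by
  have h := abs_log_sub_add_sum_range_le (ht.trans_lt (by norm_num)) 1
  simp only [range_one, sum_singleton, zero_add, pow_one, Nat.cast_zero, div_one, Nat.reduceAdd,
    sq_abs] at h
  calc |log (1 - t) + t| = |t + log (1 - t)| := by rw [add_comm]
    _ ≤ t ^ 2 / (1 - |t|) := h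
    _ ≤ t ^ 2 / (1 / 2) := by gcongr; linarith
    _ = 2 * t ^ 2 := by ring

theorem tendsto_log_natCast_div_natCast : Tendsto (fun N : ℕ => log N / N) atTop (𝓝 0) :=
  isLittleO_log_id_atTop.tendsto_div_nhds_zero.comp tendsto_natCast_atTop_atTop

theorem abs_neg_one_pow_mul_choose_mul_one_sub_div_pow_le (N n k : ℕ) :
    |(-1) ^ k * N.choose k * (1 - k / N : ℝ) ^ n| ≤ (N * exp (-(n / N))) ^ k / k.factorial := by
  rcases lt_or_ge N k with hNk | hkN
  · simp only [Nat.choose_eq_zero_of_lt hNk, Nat.cast_zero, mul_zero, zero_mul, abs_zero]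
    positivity
  have hpos : (0 : ℝ) ≤ 1 - k / N :=
    sub_nonneg.mpr (div_le_one_of_le₀ (by exact_mod_cast hkN) (by positivity))
  have hpow : (1 - k / N : ℝ) ^ n ≤ exp (-(n / N)) ^ k := by
    calc (1 - k / N : ℝ) ^ n ≤ exp (-(k / N)) ^ n := by gcongr; exact one_sub_le_exp_neg _
      _ = exp (-(n / N)) ^ k := by rw [← exp_nat_mul, ← exp_nat_mul]; ring_nf
  rw [abs_mul, abs_mul, abs_pow, abs_neg, abs_one, one_pow, one_mul, Nat.abs_cast,
    abs_pow, abs_of_nonneg hpos, mul_pow, mul_div_right_comm]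
  exact mul_le_mul (Nat.choose_le_pow_div k N) hpow (by positivity) (by positivity)

namespace CouponCollector

variable {x : ℝ} {n : ℕ → ℕ} (hn : Tendsto (fun N : ℕ => (n N : ℝ) / N - log N) atTop (𝓝 x))
include hn

theorem tendsto_div_sq : Tendsto (fun N : ℕ => (n N : ℝ) / N ^ 2) atTop (𝓝 0) := by
  have h := (hn.mul tendsto_one_div_atTop_nhds_zero_nat).add tendsto_log_natCast_div_natCast
  rw [mul_zero, add_zero] at h
  refine h.congr' ?_
  filter_upwards [eventually_ne_atTop 0] with N hN
  field_simp
  ring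

theorem tendsto_mul_exp_neg_div :
    Tendsto (fun N : ℕ => N * exp (-(n N / N))) atTop (𝓝 (exp (-x))) := by
  refine (continuous_exp.tendsto _ |>.comp hn.neg).congr' ?_
  filter_upwards [eventually_ne_atTop 0] with N hN
  simp only [comp_apply, neg_sub, exp_sub, exp_log (by positivity : (0 : ℝ) < N), exp_neg]
  ring

theorem tendsto_mul_log_one_sub_div_add_div (k : ℕ) :
    Tendsto (fun N : ℕ => n N * (log (1 - k / N) + k / N)) atTop (𝓝 0) := by
  have h := (tendsto_div_sq hn).const_mul (2 * (k : ℝ) ^ 2)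
  rw [mul_zero] at h
  refine squeeze_zero_norm' ?_ h
  filter_upwards [eventually_ge_atTop (2 * k), eventually_ne_atTop 0] with N hkN hN
  have hk : |(k : ℝ) / N| ≤ 1 / 2 := by
    rw [abs_of_nonneg (by positivity), div_le_iff₀ (by positivity)]
    have : (2 * k : ℝ) ≤ N := by exact_mod_cast hkN
    linarith
  calc ‖(n N : ℝ) * (log (1 - k / N) + k / N)‖ = n N * |log (1 - k / N) + k / N| := by
        rw [norm_mul, Real.norm_natCast, Real.norm_eq_abs]
    _ ≤ n N * (2 * (k / N) ^ 2) := by gcongr; exact abs_log_one_sub_add_le hk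
    _ = 2 * k ^ 2 * (n N / N ^ 2) := by ring

theorem tendsto_pow_mul_one_sub_div_pow (k : ℕ) :
    Tendsto (fun N : ℕ => (N : ℝ) ^ k * (1 - k / N) ^ n N) atTop (𝓝 (exp (-x) ^ k)) := by
  have h := ((tendsto_mul_exp_neg_div hn).pow k).mul
    ((continuous_exp.tendsto 0).comp (tendsto_mul_log_one_sub_div_add_div hn k))
  rw [exp_zero, mul_one] at h
  -- `Nᵏ (1 - k/N)ⁿ = (N e^{-n/N})ᵏ · e^{n (log (1 - k/N) + k/N)}`
  refine h.congr' ?_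
  filter_upwards [eventually_gt_atTop k] with N hkN
  have hN : (0 : ℝ) < N := Nat.cast_pos.mpr (by omega)
  have hpos : (0 : ℝ) < 1 - k / N := by
    rw [sub_pos, div_lt_one hN]; exact_mod_cast hkN
  conv_rhs => rw [← exp_log hpos, ← exp_nat_mul]
  rw [comp_apply, mul_pow, ← exp_nat_mul, mul_assoc, ← exp_add]
  congr 2
  field_simp
  ring

theorem tendsto_neg_one_pow_mul_choose_mul_one_sub_div_pow (k : ℕ) :
    Tendsto (fun N : ℕ => (-1) ^ k * N.choose k * (1 - k / N : ℝ) ^ n N) atTop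
      (𝓝 ((-exp (-x)) ^ k / k.factorial)) := by
  have hequiv : (fun N : ℕ => (N.choose k : ℝ) * (1 - k / N) ^ n N) ~[atTop]
      fun N : ℕ => (N : ℝ) ^ k * (1 - k / N) ^ n N / k.factorial :=
    ((isEquivalent_choose k).mul .refl).congr_right
      (.of_eq (by ext; simp only [Pi.mul_apply]; ring))
  have h := (hequiv.tendsto_nhds_iff.mpr
    ((tendsto_pow_mul_one_sub_div_pow hn k).div_const _)).const_mul ((-1 : ℝ) ^ k)
  rw [neg_pow (exp (-x)), mul_div_assoc]
  simpa only [mul_assoc] using h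

end CouponCollector

theorem tendsto_card_surjective_div_pow {x : ℝ} {n : ℕ → ℕ}
    (hn : Tendsto (fun N : ℕ => (n N : ℝ) / N - log N) atTop (𝓝 x)) :
    Tendsto (fun N : ℕ => (Nat.card {f : Fin (n N) → Fin N // Surjective f} : ℝ) / N ^ n N)
      atTop (𝓝 (exp (-exp (-x)))) := by
  have hbound : ∀ᶠ N : ℕ in atTop, ∀ k, ‖(-1) ^ k * N.choose k * (1 - k / N : ℝ) ^ n N‖ ≤
      (exp (-x) + 1) ^ k / k.factorial := by
    filter_upwards [(CouponCollector.tendsto_mul_exp_neg_div hn).eventually_le_const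
      (lt_add_one _)] with N hN k
    refine (abs_neg_one_pow_mul_choose_mul_one_sub_div_pow_le N (n N) k).trans ?_
    gcongr
  have h := tendsto_tsum_of_dominated_convergence (Real.summable_pow_div_factorial _)
    (CouponCollector.tendsto_neg_one_pow_mul_choose_mul_one_sub_div_pow hn) hbound
  have hexp : HasSum (fun k : ℕ => (-exp (-x)) ^ k / k.factorial) (exp (-exp (-x))) := by
    rw [exp_eq_exp_ℝ]
    exact NormedSpace.expSeries_div_hasSum_exp _
  rw [hexp.tsum_eq] at h
  refine h.congr' ?_
  filter_upwards [eventually_ne_atTop 0] with N hN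
  have : NeZero N := ⟨hN⟩
  simpa using (card_surjective_div_card_pow_eq_tsum (Fin (n N)) (Fin N)).symm

theorem tendsto_floor_div_sub_log (x : ℝ) :
    Tendsto (fun N : ℕ => (⌊(N : ℝ) * log N + N * x⌋₊ : ℝ) / N - log N) atTop (𝓝 x) := by
  have hlower : Tendsto (fun N : ℕ => x - 1 / N) atTop (𝓝 x) := by
    simpa using tendsto_const_nhds.sub (tendsto_one_div_atTop_nhds_zero_nat (𝕜 := ℝ))
  refine tendsto_of_tendsto_of_tendsto_of_le_of_le' hlower tendsto_const_nhds ?_ ?_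
  · filter_upwards [eventually_ne_atTop 0] with N hN
    calc x - 1 / N = ((N : ℝ) * log N + N * x - 1) / N - log N := by field_simp; ring
      _ ≤ (⌊(N : ℝ) * log N + N * x⌋₊ : ℝ) / N - log N := by
        gcongr; exact (Nat.sub_one_lt_floor _).le
  · have hlog : ∀ᶠ N : ℕ in atTop, -x ≤ log N :=
      (tendsto_log_atTop.comp tendsto_natCast_atTop_atTop).eventually_ge_atTop _
    filter_upwards [eventually_ne_atTop 0, hlog] with N hN hlogN
    calc (⌊(N : ℝ) * log N + N * x⌋₊ : ℝ) / N - log N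
        ≤ ((N : ℝ) * log N + N * x) / N - log N := by
          gcongr; exact Nat.floor_le (by nlinarith [(Nat.cast_nonneg N : (0 : ℝ) ≤ N)])
      _ = x := by field_simp; ring

open Classical in
/-- Classical Erdős–Rényi coupon collector theorem: placing `⌊N log N + N x⌋` balls
independently and uniformly into `N` urns, the probability that every urn contains at
least one ball tends to `exp(−exp(−x))` as `N → ∞`. -/
theorem coupon_collector_limit (x : ℝ) :
    Tendsto (fun N : ℕ =>
        ((Finset.univ.filter (fun f : Fin ⌊(N : ℝ) * Real.log N + N * x⌋₊ → Fin N =>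
            ∀ u : Fin N, ∃ t, f t = u)).card : ℝ)
          / (N : ℝ) ^ ⌊(N : ℝ) * Real.log N + N * x⌋₊)
      atTop (nhds (Real.exp (-Real.exp (-x)))) := by
  convert tendsto_card_surjective_div_pow (tendsto_floor_div_sub_log x) using 3 with N
  rw [Nat.card_eq_fintype_card, Fintype.card_subtype]
  congr 2
  exact filter_congr fun _ _ => Iff.rfl
end
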